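/- arXiv:1305.5826 — 3 statements merged into one kernel-verified Lean document; each statement's English description precedes it below -/
import Mathlib

section
/- (Cross-block PITC covariance equivalence.) For any two distinct block indices i ≠ j, Σ_{U_i U_j} − Σ_{U_i S} (Σ_{SS}^{-1} − Σ̈_{SS}^{-1}) Σ_{S U_j} = Σ_{U_i U_j} − Γ_{U_i D} (Γ_{DD} + Λ)^{-1} Γ_{D U_j}, where Γ_{U_i D} is the block row with blocks Γ_{U_i D_1},…,Γ_{U_i D_M}, Γ_{D U_j} is the transpose of Γ_{U_j D}, and Γ_{DD} + Λ is assumed invertible. -/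
/-!
Writing `K_SD` for the block row `[Σ_{SD_1} ⋯ Σ_{SD_M}]`, one has `Σ̈_SS = Σ_SS + K_SD Λ⁻¹ K_DS`, since `Λ⁻¹`
is block diagonal with blocks `Σ_{D_mD_m|S}⁻¹`. The Woodbury identity then gives
`Σ_SS⁻¹ - Σ̈_SS⁻¹ = Σ_SS⁻¹ K_SD (Γ_DD + Λ)⁻¹ K_DS Σ_SS⁻¹`, and `Γ_{U_iD} = Σ_{U_iS} Σ_SS⁻¹ K_SD`.
-/

open Matrix

namespace Matrix

section SigmaCols

variable {ι l m : Type*} {d : ι → Type*} {α : Type*}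

def sigmaCols (A : ∀ i, Matrix m (d i) α) : Matrix m (Σ i, d i) α :=
  of fun s x => A x.1 s x.2

theorem mul_sigmaCols [Fintype m] [NonUnitalNonAssocSemiring α] (C : Matrix l m α)
    (A : ∀ i, Matrix m (d i) α) : C * sigmaCols A = sigmaCols fun i => C * A i :=
  rfl

variable [Fintype ι] [∀ i, Fintype (d i)]

theorem sigmaCols_mul_blockDiagonal'_mul_transpose [DecidableEq ι] [NonUnitalNonAssocSemiring α]
    (A : ∀ i, Matrix m (d i) α) (R : ∀ i, Matrix (d i) (d i) α) :
    sigmaCols A * blockDiagonal' R * (sigmaCols A)ᵀ = ∑ i, A i * R i * (A i)ᵀ := by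
  ext s t
  simp only [sigmaCols, mul_apply, sum_apply, transpose_apply, of_apply]
  rw [← Finset.univ_sigma_univ, Finset.sum_sigma]
  refine Finset.sum_congr rfl fun i _ => Finset.sum_congr rfl fun y _ => ?_
  congr 1
  rw [Finset.sum_sigma, Finset.sum_eq_single_of_mem i (Finset.mem_univ i)]
  · simp [blockDiagonal'_apply_eq]
  · intro i' _ hne
    simp [blockDiagonal'_apply_ne _ _ _ hne]

end SigmaCols

variable {K : Type*} [Field K]

theorem blockDiagonal'_mul_blockDiagonal'_inv {ι : Type*} [Fintype ι] [DecidableEq ι]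
    {d : ι → Type*} [∀ i, Fintype (d i)] [∀ i, DecidableEq (d i)] (Q : ∀ i, Matrix (d i) (d i) K)
    (hQ : ∀ i, IsUnit (Q i).det) :
    blockDiagonal' Q * blockDiagonal' (fun i => (Q i)⁻¹) = 1 := by
  rw [← blockDiagonal'_mul, ← blockDiagonal'_one]
  exact congrArg blockDiagonal' (funext fun i => mul_nonsing_inv _ (hQ i))

theorem inv_sub_inv_add_mul_inv_mul_transpose {n m : Type*} [Fintype n] [DecidableEq n]
    [Fintype m] [DecidableEq m] {A : Matrix n n K} {Λ : Matrix m m K} (V : Matrix n m K)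
    (hA : IsUnit A.det) (hΛ : IsUnit Λ.det) (h : IsUnit (Vᵀ * A⁻¹ * V + Λ).det) :
    A⁻¹ - (A + V * Λ⁻¹ * Vᵀ)⁻¹ = A⁻¹ * V * (Vᵀ * A⁻¹ * V + Λ)⁻¹ * Vᵀ * A⁻¹ := by
  have hΛΛ : (Λ⁻¹)⁻¹ + Vᵀ * A⁻¹ * V = Vᵀ * A⁻¹ * V + Λ := by
    rw [nonsing_inv_nonsing_inv Λ hΛ, add_comm]
  rw [add_mul_mul_inv_eq_sub _ _ _ _ ((isUnit_iff_isUnit_det _).2 hA)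
    ((isUnit_iff_isUnit_det _).2 (isUnit_nonsing_inv_det Λ hΛ))
    (hΛΛ ▸ (isUnit_iff_isUnit_det _).2 h), hΛΛ, sub_sub_cancel]

end Matrix

theorem stmt_6_general
    {M : ℕ}
    {S : Type} [Fintype S] [DecidableEq S]
    {D : Fin M → Type} [∀ m, Fintype (D m)] [∀ m, DecidableEq (D m)]
    (KSS : Matrix S S ℝ) (hKSSsym : KSSᵀ = KSS) (hKSSinv : IsUnit KSS.det)
    (KSD : ∀ m, Matrix S (D m) ℝ)
    (Q : ∀ m, Matrix (D m) (D m) ℝ)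
    (hQinv : ∀ m, IsUnit (Q m).det)
    (Λ : Matrix ((m : Fin M) × D m) ((m : Fin M) × D m) ℝ)
    (hΛ : Λ = Matrix.blockDiagonal' Q)
    (KSDf : Matrix S ((m : Fin M) × D m) ℝ)
    (hKSDf : KSDf = Matrix.of fun s d => KSD d.1 s d.2)
    (Kdd : Matrix S S ℝ)
    (hKdd : Kdd = KSS + ∑ m, KSD m * (Q m)⁻¹ * (KSD m)ᵀ)
    {U : Fin M → Type}
    (KUS : ∀ m, Matrix (U m) S ℝ)
    (ΓDD : Matrix ((m : Fin M) × D m) ((m : Fin M) × D m) ℝ)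
    (hΓDD : ΓDD = KSDfᵀ * KSS⁻¹ * KSDf)
    (Γrow : ∀ m, Matrix (U m) ((k : Fin M) × D k) ℝ)
    (hΓrow : ∀ m, Γrow m = Matrix.of fun u d => (KUS m * KSS⁻¹ * KSD d.1) u d.2)
    (hGLinv : IsUnit (ΓDD + Λ).det)
    (i j : Fin M) (KUiUj : Matrix (U i) (U j) ℝ) :
    KUiUj - KUS i * (KSS⁻¹ - Kdd⁻¹) * (KUS j)ᵀ
      = KUiUj - Γrow i * (ΓDD + Λ)⁻¹ * (Γrow j)ᵀ := by
  have hKSDf' : KSDf = sigmaCols KSD := hKSDf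
  have hΛright : Λ * blockDiagonal' (fun m => (Q m)⁻¹) = 1 :=
    hΛ ▸ blockDiagonal'_mul_blockDiagonal'_inv Q hQinv
  have hΛinv : Λ⁻¹ = blockDiagonal' fun m => (Q m)⁻¹ := inv_eq_right_inv hΛright
  have hKdd' : Kdd = KSS + KSDf * Λ⁻¹ * KSDfᵀ := by
    rw [hKdd, hΛinv, hKSDf', sigmaCols_mul_blockDiagonal'_mul_transpose]
  have hΓrow' : ∀ m, Γrow m = KUS m * KSS⁻¹ * KSDf := fun m => by
    rw [hΓrow, hKSDf', mul_sigmaCols]; rfl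
  have hKSSinvT : (KSS⁻¹)ᵀ = KSS⁻¹ := by rw [transpose_nonsing_inv, hKSSsym]
  rw [hKdd', inv_sub_inv_add_mul_inv_mul_transpose KSDf hKSSinv
    (isUnit_det_of_right_inverse hΛright) (hΓDD ▸ hGLinv), ← hΓDD, hΓrow' i, hΓrow' j]
  simp only [transpose_mul, hKSSinvT, Matrix.mul_assoc]

theorem stmt_6
    {M : ℕ} (hM : 0 < M)
    {S : Type} [Fintype S] [DecidableEq S]
    {D : Fin M → Type} [∀ m, Fintype (D m)] [∀ m, DecidableEq (D m)]
    (KSS : Matrix S S ℝ) (hKSSsym : KSSᵀ = KSS) (hKSSinv : IsUnit KSS.det)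
    (KSD : ∀ m, Matrix S (D m) ℝ)
    (KDD : ∀ m, Matrix (D m) (D m) ℝ) (hKDDsym : ∀ m, (KDD m)ᵀ = KDD m)
    (Q : ∀ m, Matrix (D m) (D m) ℝ)
    (hQ : ∀ m, Q m = KDD m - (KSD m)ᵀ * KSS⁻¹ * KSD m)
    (hQinv : ∀ m, IsUnit (Q m).det)
    (Λ : Matrix ((m : Fin M) × D m) ((m : Fin M) × D m) ℝ)
    (hΛ : Λ = Matrix.blockDiagonal' Q)
    (KSDf : Matrix S ((m : Fin M) × D m) ℝ)
    (hKSDf : KSDf = Matrix.of fun s d => KSD d.1 s d.2)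
    (Kdd : Matrix S S ℝ)
    (hKdd : Kdd = KSS + ∑ m, KSD m * (Q m)⁻¹ * (KSD m)ᵀ)
    (hKddinv : IsUnit Kdd.det)
    {U : Fin M → Type} [∀ m, Fintype (U m)] [∀ m, DecidableEq (U m)]
    (KUS : ∀ m, Matrix (U m) S ℝ)
    (ΓDD : Matrix ((m : Fin M) × D m) ((m : Fin M) × D m) ℝ)
    (hΓDD : ΓDD = KSDfᵀ * KSS⁻¹ * KSDf)
    (Γrow : ∀ m, Matrix (U m) ((k : Fin M) × D k) ℝ)
    (hΓrow : ∀ m, Γrow m = Matrix.of fun u d => (KUS m * KSS⁻¹ * KSD d.1) u d.2)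
    (hGLinv : IsUnit (ΓDD + Λ).det)
    (i j : Fin M) (hij : i ≠ j) (KUiUj : Matrix (U i) (U j) ℝ) :
    KUiUj - KUS i * (KSS⁻¹ - Kdd⁻¹) * (KUS j)ᵀ
      = KUiUj - Γrow i * (ΓDD + Λ)⁻¹ * (Γrow j)ᵀ :=
  stmt_6_general KSS hKSSsym hKSSinv KSD Q hQinv Λ hΛ KSDf hKSDf Kdd hKdd KUS ΓDD hΓDD Γrow hΓrow
    hGLinv i j KUiUj
end

section
/- For every block index m, Γ̃_{U_m D} Λ^{-1} Σ_{DS} = Σ_{U_m S} Σ_{SS}^{-1} Σ̈_{SS} − Φ_{U_m S}^m. -/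
/-!
Since `Λ` is block diagonal, `Γ̃_{U_m D} Λ⁻¹ Σ_{DS}` is the sum over blocks `k` of
`Γ̃_{U_m D_k} Σ_{D_k D_k|S}⁻¹ Σ_{D_k S}`. The row `Γ̃_{U_m D}` agrees with
`Σ_{U_m S} Σ_{SS}⁻¹ Σ_{SD}` except in block `m`, so the sum is
`Σ_{U_m S} Σ_{SS}⁻¹ (Σ̈_{SS} - Σ_{SS})` plus a correction in block `m`, and `Φ^m` collects
exactly that correction together with `Σ_{U_m S}`.
-/

open Matrix

namespace Matrix

variable {ι : Type*} [Fintype ι] [DecidableEq ι] {D : ι → Type*} [∀ k, Fintype (D k)]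
  {R : Type*} [CommRing R]

theorem inv_blockDiagonal' [∀ k, DecidableEq (D k)] (B : ∀ k, Matrix (D k) (D k) R)
    (hB : ∀ k, IsUnit (B k).det) :
    (blockDiagonal' B)⁻¹ = blockDiagonal' fun k => (B k)⁻¹ := by
  refine inv_eq_right_inv ?_
  rw [← blockDiagonal'_mul]
  simp_rw [mul_nonsing_inv _ (hB _)]
  exact blockDiagonal'_one

theorem of_sigma_mul_blockDiagonal'_mul_of_sigma {U V : Type*}
    (X : ∀ k, Matrix U (D k) R) (B : ∀ k, Matrix (D k) (D k) R) (Y : ∀ k, Matrix (D k) V R) :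
    (of fun u (p : Σ k, D k) => X p.1 u p.2) * blockDiagonal' B *
        (of fun (p : Σ k, D k) v => Y p.1 p.2 v) = ∑ k, X k * B k * Y k := by
  have hXB : (of fun u (p : Σ k, D k) => X p.1 u p.2) * blockDiagonal' B
      = of fun u (p : Σ k, D k) => (X p.1 * B p.1) u p.2 := by
    ext u ⟨k, d⟩
    simp only [mul_apply, of_apply, Fintype.sum_sigma]
    rw [Fintype.sum_eq_single k fun k' hk' => by simp [blockDiagonal'_apply_ne _ _ _ hk']]
    simp
  rw [hXB]
  ext u v
  simp [mul_apply, sum_apply, Fintype.sum_sigma]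

end Matrix

theorem Fintype.sum_update_eq {ι : Type*} [Fintype ι] [DecidableEq ι] {α : ι → Type*}
    {G : Type*} [AddCommGroup G] (F : ∀ k, α k → G) (A : ∀ k, α k) (m : ι) (a : α m) :
    ∑ k, F k (Function.update A m a k) = ∑ k, F k (A k) + (F m a - F m (A m)) := by
  rw [Fintype.sum_eq_add_sum_compl m, Fintype.sum_eq_add_sum_compl m fun k => F k (A k),
    Function.update_self]
  rw [Finset.sum_congr rfl fun k hk =>
    by rw [Function.update_of_ne (Finset.mem_compl.1 hk ∘ Finset.mem_singleton.2)]]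
  abel

theorem stmt_8_general
    {M : ℕ}
    {S : Type} [Fintype S] [DecidableEq S]
    {D : Fin M → Type} [∀ m, Fintype (D m)] [∀ m, DecidableEq (D m)]
    (KSS : Matrix S S ℝ) (hKSSinv : IsUnit KSS.det)
    (KSD : ∀ m, Matrix S (D m) ℝ)
    (Q : ∀ m, Matrix (D m) (D m) ℝ)
    (hQinv : ∀ m, IsUnit (Q m).det)
    (Λ : Matrix ((m : Fin M) × D m) ((m : Fin M) × D m) ℝ)
    (hΛ : Λ = Matrix.blockDiagonal' Q)
    (KSDf : Matrix S ((m : Fin M) × D m) ℝ)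
    (hKSDf : KSDf = Matrix.of fun s d => KSD d.1 s d.2)
    (Kdd : Matrix S S ℝ)
    (hKdd : Kdd = KSS + ∑ m, KSD m * (Q m)⁻¹ * (KSD m)ᵀ)
    {U : Fin M → Type}
    (KUS : ∀ m, Matrix (U m) S ℝ)
    (KUD : ∀ m, Matrix (U m) (D m) ℝ)
    (tΓ : ∀ m, Matrix (U m) ((k : Fin M) × D k) ℝ)
    (htΓ : ∀ m, tΓ m = Matrix.of fun u d =>
      if h : d.1 = m then KUD m u (cast (congrArg D h) d.2)
      else (KUS m * KSS⁻¹ * KSD d.1) u d.2)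
    (Φm : ∀ m, Matrix (U m) S ℝ)
    (hΦm : ∀ m, Φm m = KUS m + KUS m * KSS⁻¹ * (KSD m * (Q m)⁻¹ * (KSD m)ᵀ)
      - KUD m * (Q m)⁻¹ * (KSD m)ᵀ)
    :
    ∀ m, tΓ m * Λ⁻¹ * KSDfᵀ = KUS m * KSS⁻¹ * Kdd - Φm m := by
  intro m
  set Γ : ∀ k, Matrix (U m) (D k) ℝ := fun k => KUS m * KSS⁻¹ * KSD k
  have htΓ_blocks : tΓ m = of fun u p => Function.update Γ m (KUD m) p.1 u p.2 := by
    rw [htΓ]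
    ext u ⟨k, d⟩
    by_cases h : k = m
    · subst h; simp
    · simp [h, Γ]
  have hKSDf_transpose : KSDfᵀ = of fun p s => (KSD p.1)ᵀ p.2 s := by rw [hKSDf]; rfl
  have hKUS : KUS m * KSS⁻¹ * KSS = KUS m := by
    rw [Matrix.mul_assoc, nonsing_inv_mul _ hKSSinv, Matrix.mul_one]
  rw [htΓ_blocks, hΛ, inv_blockDiagonal' Q hQinv, hKSDf_transpose,
    of_sigma_mul_blockDiagonal'_mul_of_sigma (Function.update Γ m (KUD m)) _ fun k => (KSD k)ᵀ,
    Fintype.sum_update_eq (fun k X => X * (Q k)⁻¹ * (KSD k)ᵀ), hΦm, hKdd, Matrix.mul_add,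
    hKUS, Matrix.mul_sum]
  simp only [Γ, Matrix.mul_assoc]
  abel

theorem stmt_8
    {M : ℕ} (hM : 0 < M)
    {S : Type} [Fintype S] [DecidableEq S]
    {D : Fin M → Type} [∀ m, Fintype (D m)] [∀ m, DecidableEq (D m)]
    (KSS : Matrix S S ℝ) (hKSSsym : KSSᵀ = KSS) (hKSSinv : IsUnit KSS.det)
    (KSD : ∀ m, Matrix S (D m) ℝ)
    (KDD : ∀ m, Matrix (D m) (D m) ℝ) (hKDDsym : ∀ m, (KDD m)ᵀ = KDD m)
    (Q : ∀ m, Matrix (D m) (D m) ℝ)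
    (hQ : ∀ m, Q m = KDD m - (KSD m)ᵀ * KSS⁻¹ * KSD m)
    (hQinv : ∀ m, IsUnit (Q m).det)
    (Λ : Matrix ((m : Fin M) × D m) ((m : Fin M) × D m) ℝ)
    (hΛ : Λ = Matrix.blockDiagonal' Q)
    (KSDf : Matrix S ((m : Fin M) × D m) ℝ)
    (hKSDf : KSDf = Matrix.of fun s d => KSD d.1 s d.2)
    (Kdd : Matrix S S ℝ)
    (hKdd : Kdd = KSS + ∑ m, KSD m * (Q m)⁻¹ * (KSD m)ᵀ)
    {U : Fin M → Type} [∀ m, Fintype (U m)] [∀ m, DecidableEq (U m)]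
    (KUS : ∀ m, Matrix (U m) S ℝ)
    (KUD : ∀ m, Matrix (U m) (D m) ℝ)
    (tΓ : ∀ m, Matrix (U m) ((k : Fin M) × D k) ℝ)
    (htΓ : ∀ m, tΓ m = Matrix.of fun u d =>
      if h : d.1 = m then KUD m u (cast (congrArg D h) d.2)
      else (KUS m * KSS⁻¹ * KSD d.1) u d.2)
    (Φm : ∀ m, Matrix (U m) S ℝ)
    (hΦm : ∀ m, Φm m = KUS m + KUS m * KSS⁻¹ * (KSD m * (Q m)⁻¹ * (KSD m)ᵀ)
      - KUD m * (Q m)⁻¹ * (KSD m)ᵀ)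
    :
    ∀ m, tΓ m * Λ⁻¹ * KSDfᵀ = KUS m * KSS⁻¹ * Kdd - Φm m :=
  stmt_8_general KSS hKSSinv KSD Q hQinv Λ hΛ KSDf hKSDf Kdd hKdd KUS KUD tΓ htΓ Φm hΦm
end

section
/- (Theorem 2, mean part: pPIC equals PIC.) For every block index m, the pPIC predictive mean equals the centralized PIC predictive mean: μ_{U_m} + (Φ_{U_m S}^m Σ̈_{SS}^{-1} ÿ_S − Σ_{U_m S} Σ_{SS}^{-1} ẏ_S^m) + ẏ_{U_m}^m = μ_{U_m} + Γ̃_{U_m D} (Γ_{DD} + Λ)^{-1} (y_D − μ_D), where Γ_{DD} + Λ is assumed invertible. -/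
/-!
Write `c = y_D - μ_D`, `A = Σ_SD` and `w = Σ̈_SS⁻¹ ÿ_S`, so that `Σ̈_SS = Σ_SS + A Λ⁻¹ Aᵀ` and
`ÿ_S = A Λ⁻¹ c`. By the Woodbury identity the centralized solution `(Aᵀ Σ_SS⁻¹ A + Λ)⁻¹ c` is
`v = Λ⁻¹ (c - Aᵀ w)`, and `A v = Σ_SS w`. As `Λ` is block diagonal, the `m`-th block of `v` is
`Σ_{D_m D_m|S}⁻¹ (c_m - Σ_{D_m S} w)`, a local quantity. Finally `Γ̃_{U_m D}` is the block row
`Σ_{U_m S} Σ_SS⁻¹ A` with its `m`-th block replaced by `Σ_{U_m D_m}`, so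
`Γ̃_{U_m D} v = Σ_{U_m S} w + (Σ_{U_m D_m} - Σ_{U_m S} Σ_SS⁻¹ Σ_{S D_m}) v_m`, which expands to the
pPIC mean.
-/

open Matrix

namespace Matrix

variable {R : Type*}

section Woodbury

variable [CommRing R] {S D : Type*} [Fintype S] [DecidableEq S] [Fintype D] [DecidableEq D]

theorem mul_inv_mul_add_inv_mulVec (K : Matrix S S R) (Λ : Matrix D D R) (U : Matrix D S R)
    (V : Matrix S D R) (c : D → R) (hK : IsUnit K.det) (hΛ : IsUnit Λ.det)
    (hKΛ : IsUnit (K + V * Λ⁻¹ * U).det) :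
    (U * K⁻¹ * V + Λ)⁻¹ *ᵥ c
      = Λ⁻¹ *ᵥ (c - U *ᵥ ((K + V * Λ⁻¹ * U)⁻¹ *ᵥ (V *ᵥ (Λ⁻¹ *ᵥ c)))) := by
  have hKK : K⁻¹⁻¹ = K := nonsing_inv_nonsing_inv K hK
  rw [add_comm, add_mul_mul_inv_eq_sub Λ U K⁻¹ V ((isUnit_iff_isUnit_det _).mpr hΛ)
    ((isUnit_iff_isUnit_det _).mpr (isUnit_nonsing_inv_det K hK))
    (by rw [hKK]; exact (isUnit_iff_isUnit_det _).mpr hKΛ), hKK]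
  simp only [sub_mulVec, mulVec_sub, mulVec_mulVec, Matrix.mul_assoc]

theorem mulVec_inv_mulVec_sub_eq (K : Matrix S S R) (Λ : Matrix D D R) (U : Matrix D S R)
    (V : Matrix S D R) (c : D → R) (hKΛ : IsUnit (K + V * Λ⁻¹ * U).det) :
    V *ᵥ (Λ⁻¹ *ᵥ (c - U *ᵥ ((K + V * Λ⁻¹ * U)⁻¹ *ᵥ (V *ᵥ (Λ⁻¹ *ᵥ c)))))
      = K *ᵥ ((K + V * Λ⁻¹ * U)⁻¹ *ᵥ (V *ᵥ (Λ⁻¹ *ᵥ c))) := by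
  set w := (K + V * Λ⁻¹ * U)⁻¹ *ᵥ (V *ᵥ (Λ⁻¹ *ᵥ c))
  have hw : (K + V * Λ⁻¹ * U) *ᵥ w = V *ᵥ (Λ⁻¹ *ᵥ c) := by
    rw [mulVec_mulVec, mul_nonsing_inv _ hKΛ, one_mulVec]
  rw [add_mulVec] at hw
  simp only [mulVec_sub, mulVec_mulVec, Matrix.mul_assoc] at hw ⊢
  rw [← hw]
  abel

end Woodbury

section BlockRow

variable {ι : Type*} {D : ι → Type*} {X Y : Type*}

def blockRow (B : ∀ i, Matrix X (D i) R) : Matrix X ((i : ι) × D i) R :=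
  of fun x d => B d.1 x d.2

theorem blockRow_update [DecidableEq ι] (B : ∀ i, Matrix X (D i) R) (i : ι)
    (C : Matrix X (D i) R) :
    blockRow (Function.update B i C)
      = of fun x d => if h : d.1 = i then C x (cast (congrArg D h) d.2) else B d.1 x d.2 := by
  ext x ⟨j, d⟩
  by_cases h : j = i
  · subst h; simp [blockRow]
  · simp [blockRow, h]

section Semiring

variable [NonUnitalNonAssocSemiring R]

theorem blockRow_mulVec [Fintype ι] [∀ i, Fintype (D i)] (B : ∀ i, Matrix X (D i) R)
    (v : ((i : ι) × D i) → R) :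
    blockRow B *ᵥ v = ∑ i, B i *ᵥ fun d => v ⟨i, d⟩ := by
  ext x
  simp only [mulVec, dotProduct, blockRow, of_apply, Finset.sum_apply,
    ← Finset.univ_sigma_univ, Finset.sum_sigma]

theorem mul_blockRow [Fintype X] (A : Matrix Y X R) (B : ∀ i, Matrix X (D i) R) :
    A * blockRow B = blockRow fun i => A * B i :=
  rfl

theorem blockRow_mul_transpose_blockRow [Fintype ι] [∀ i, Fintype (D i)]
    (B : ∀ i, Matrix X (D i) R) (C : ∀ i, Matrix Y (D i) R) :
    blockRow B * (blockRow C)ᵀ = ∑ i, B i * (C i)ᵀ := by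
  ext x y
  simp only [mul_apply, blockRow, transpose_apply, of_apply, Matrix.sum_apply,
    ← Finset.univ_sigma_univ, Finset.sum_sigma]

theorem blockRow_mul_blockDiagonal' [Fintype ι] [DecidableEq ι] [∀ i, Fintype (D i)]
    [∀ i, DecidableEq (D i)] (B : ∀ i, Matrix X (D i) R) (P : ∀ i, Matrix (D i) (D i) R) :
    blockRow B * blockDiagonal' P = blockRow fun i => B i * P i := by
  ext x ⟨i, d⟩
  simp only [mul_apply, blockRow, of_apply, ← Finset.univ_sigma_univ, Finset.sum_sigma]
  rw [Finset.sum_eq_single i]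
  · simp
  · intro j _ hj
    exact Finset.sum_eq_zero fun d' _ => by rw [blockDiagonal'_apply_ne _ _ _ hj, mul_zero]
  · simp

theorem blockDiagonal'_mulVec_apply [Fintype ι] [DecidableEq ι] [∀ i, Fintype (D i)]
    (P : ∀ i, Matrix (D i) (D i) R) (v : ((i : ι) × D i) → R) (i : ι) (d : D i) :
    (blockDiagonal' P *ᵥ v) ⟨i, d⟩ = (P i *ᵥ fun d' => v ⟨i, d'⟩) d := by
  simp only [mulVec, dotProduct, ← Finset.univ_sigma_univ, Finset.sum_sigma]
  rw [Finset.sum_eq_single i]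
  · simp
  · intro j _ hj
    exact Finset.sum_eq_zero fun d' _ => by rw [blockDiagonal'_apply_ne _ _ _ hj.symm, zero_mul]
  · simp

end Semiring

theorem blockRow_update_mulVec [NonUnitalNonAssocRing R] [Fintype ι] [DecidableEq ι]
    [∀ i, Fintype (D i)] (B : ∀ i, Matrix X (D i) R) (i : ι) (C : Matrix X (D i) R)
    (v : ((i : ι) × D i) → R) :
    blockRow (Function.update B i C) *ᵥ v
      = blockRow B *ᵥ v + (C - B i) *ᵥ fun d => v ⟨i, d⟩ := by
  rw [blockRow_mulVec, blockRow_mulVec, ← Finset.add_sum_erase _ _ (Finset.mem_univ i),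
    ← Finset.add_sum_erase _ _ (Finset.mem_univ i), Function.update_self, sub_mulVec]
  rw [Finset.sum_congr rfl fun j hj => by rw [Function.update_of_ne (Finset.ne_of_mem_erase hj)]]
  abel

end BlockRow

section BlockDiagonalInv

variable [CommRing R] {ι : Type*} [Fintype ι] [DecidableEq ι] {D : ι → Type*}
  [∀ i, Fintype (D i)] [∀ i, DecidableEq (D i)] {P : ∀ i, Matrix (D i) (D i) R}

theorem blockDiagonal'_mul_blockDiagonal'_inv_s11 (hP : ∀ i, IsUnit (P i).det) :
    blockDiagonal' P * blockDiagonal' (fun i => (P i)⁻¹) = 1 := by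
  rw [← blockDiagonal'_mul, ← blockDiagonal'_one]
  congr 1
  funext i
  exact mul_nonsing_inv _ (hP i)

theorem inv_blockDiagonal'_s11 (hP : ∀ i, IsUnit (P i).det) :
    (blockDiagonal' P)⁻¹ = blockDiagonal' fun i => (P i)⁻¹ :=
  inv_eq_right_inv (blockDiagonal'_mul_blockDiagonal'_inv_s11 hP)

theorem isUnit_det_blockDiagonal' (hP : ∀ i, IsUnit (P i).det) :
    IsUnit (blockDiagonal' P).det :=
  isUnit_det_of_right_inverse (blockDiagonal'_mul_blockDiagonal'_inv_s11 hP)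

end BlockDiagonalInv

end Matrix

theorem stmt_11_general
    {M : ℕ}
    {S : Type} [Fintype S] [DecidableEq S]
    {D : Fin M → Type} [∀ m, Fintype (D m)] [∀ m, DecidableEq (D m)]
    (KSS : Matrix S S ℝ) (hKSSinv : IsUnit KSS.det)
    (KSD : ∀ m, Matrix S (D m) ℝ)
    (Q : ∀ m, Matrix (D m) (D m) ℝ)
    (hQinv : ∀ m, IsUnit (Q m).det)
    (Λ : Matrix ((m : Fin M) × D m) ((m : Fin M) × D m) ℝ)
    (hΛ : Λ = Matrix.blockDiagonal' Q)
    (KSDf : Matrix S ((m : Fin M) × D m) ℝ)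
    (hKSDf : KSDf = Matrix.of fun s d => KSD d.1 s d.2)
    (Kdd : Matrix S S ℝ)
    (hKdd : Kdd = KSS + ∑ m, KSD m * (Q m)⁻¹ * (KSD m)ᵀ)
    (hKddinv : IsUnit Kdd.det)
    (yD μD : ((m : Fin M) × D m) → ℝ)
    (cY : ∀ m, D m → ℝ) (hcY : ∀ m d, cY m d = yD ⟨m, d⟩ - μD ⟨m, d⟩)
    (ydot : ∀ m, S → ℝ)
    (hydot : ∀ m, ydot m = KSD m *ᵥ ((Q m)⁻¹ *ᵥ cY m))
    (ydd : S → ℝ) (hydd : ydd = ∑ m, ydot m)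
    {U : Fin M → Type}
    (KUS : ∀ m, Matrix (U m) S ℝ)
    (μU : ∀ m, U m → ℝ)
    (KUD : ∀ m, Matrix (U m) (D m) ℝ)
    (tΓ : ∀ m, Matrix (U m) ((k : Fin M) × D k) ℝ)
    (htΓ : ∀ m, tΓ m = Matrix.of fun u d =>
      if h : d.1 = m then KUD m u (cast (congrArg D h) d.2)
      else (KUS m * KSS⁻¹ * KSD d.1) u d.2)
    (Φm : ∀ m, Matrix (U m) S ℝ)
    (hΦm : ∀ m, Φm m = KUS m + KUS m * KSS⁻¹ * (KSD m * (Q m)⁻¹ * (KSD m)ᵀ)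
      - KUD m * (Q m)⁻¹ * (KSD m)ᵀ)
    (ΓDD : Matrix ((m : Fin M) × D m) ((m : Fin M) × D m) ℝ)
    (hΓDD : ΓDD = KSDfᵀ * KSS⁻¹ * KSDf)
    :
    ∀ m, μU m + (Φm m *ᵥ (Kdd⁻¹ *ᵥ ydd) - KUS m *ᵥ (KSS⁻¹ *ᵥ ydot m))
        + KUD m *ᵥ ((Q m)⁻¹ *ᵥ cY m)
      = μU m + tΓ m *ᵥ ((ΓDD + Λ)⁻¹ *ᵥ (yD - μD)) := by
  intro m
  have hA : KSDf = blockRow KSD := hKSDf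
  have hΛinv : Λ⁻¹ = blockDiagonal' fun k => (Q k)⁻¹ := hΛ ▸ inv_blockDiagonal'_s11 hQinv
  have hΛdet : IsUnit Λ.det := hΛ ▸ isUnit_det_blockDiagonal' hQinv
  have hcY' : ∀ k, cY k = fun d => (yD - μD) ⟨k, d⟩ := fun k => funext (hcY k)
  have hKdd' : Kdd = KSS + KSDf * Λ⁻¹ * KSDfᵀ := by
    rw [hKdd, hA, hΛinv, blockRow_mul_blockDiagonal', blockRow_mul_transpose_blockRow]
  have hydd' : ydd = KSDf *ᵥ (Λ⁻¹ *ᵥ (yD - μD)) := by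
    rw [hydd, hA, hΛinv, mulVec_mulVec, blockRow_mul_blockDiagonal', blockRow_mulVec]
    simp only [hydot, hcY', mulVec_mulVec]
  set w := Kdd⁻¹ *ᵥ ydd with hw
  have hsolve : (ΓDD + Λ)⁻¹ *ᵥ (yD - μD) = Λ⁻¹ *ᵥ ((yD - μD) - KSDfᵀ *ᵥ w) := by
    rw [hΓDD, hw, hKdd', hydd']
    exact mul_inv_mul_add_inv_mulVec _ _ _ _ _ hKSSinv hΛdet (hKdd' ▸ hKddinv)
  have hAv : KSDf *ᵥ (Λ⁻¹ *ᵥ ((yD - μD) - KSDfᵀ *ᵥ w)) = KSS *ᵥ w := by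
    rw [hw, hKdd', hydd']
    exact mulVec_inv_mulVec_sub_eq _ _ _ _ _ (hKdd' ▸ hKddinv)
  have hvm : (fun d => (Λ⁻¹ *ᵥ ((yD - μD) - KSDfᵀ *ᵥ w)) ⟨m, d⟩)
      = (Q m)⁻¹ *ᵥ (cY m - (KSD m)ᵀ *ᵥ w) := by
    ext d
    rw [hΛinv, blockDiagonal'_mulVec_apply, hcY' m, hA]
    rfl
  have htΓ' : tΓ m = blockRow (Function.update (fun k => KUS m * KSS⁻¹ * KSD k) m (KUD m)) := by
    rw [htΓ, blockRow_update]
  rw [hsolve, htΓ', blockRow_update_mulVec, ← mul_blockRow, ← hA, ← mulVec_mulVec, hAv,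
    mulVec_mulVec w, nonsing_inv_mul_cancel_right KSS _ hKSSinv, hvm, hΦm, hydot]
  simp only [sub_mulVec, add_mulVec, mulVec_sub, mulVec_mulVec, Matrix.sub_mul,
    Matrix.mul_assoc]
  abel

theorem stmt_11
    {M : ℕ} (hM : 0 < M)
    {S : Type} [Fintype S] [DecidableEq S]
    {D : Fin M → Type} [∀ m, Fintype (D m)] [∀ m, DecidableEq (D m)]
    (KSS : Matrix S S ℝ) (hKSSsym : KSSᵀ = KSS) (hKSSinv : IsUnit KSS.det)
    (KSD : ∀ m, Matrix S (D m) ℝ)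
    (KDD : ∀ m, Matrix (D m) (D m) ℝ) (hKDDsym : ∀ m, (KDD m)ᵀ = KDD m)
    (Q : ∀ m, Matrix (D m) (D m) ℝ)
    (hQ : ∀ m, Q m = KDD m - (KSD m)ᵀ * KSS⁻¹ * KSD m)
    (hQinv : ∀ m, IsUnit (Q m).det)
    (Λ : Matrix ((m : Fin M) × D m) ((m : Fin M) × D m) ℝ)
    (hΛ : Λ = Matrix.blockDiagonal' Q)
    (KSDf : Matrix S ((m : Fin M) × D m) ℝ)
    (hKSDf : KSDf = Matrix.of fun s d => KSD d.1 s d.2)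
    (Kdd : Matrix S S ℝ)
    (hKdd : Kdd = KSS + ∑ m, KSD m * (Q m)⁻¹ * (KSD m)ᵀ)
    (hKddinv : IsUnit Kdd.det)
    (yD μD : ((m : Fin M) × D m) → ℝ)
    (cY : ∀ m, D m → ℝ) (hcY : ∀ m d, cY m d = yD ⟨m, d⟩ - μD ⟨m, d⟩)
    (ydot : ∀ m, S → ℝ)
    (hydot : ∀ m, ydot m = KSD m *ᵥ ((Q m)⁻¹ *ᵥ cY m))
    (ydd : S → ℝ) (hydd : ydd = ∑ m, ydot m)
    {U : Fin M → Type} [∀ m, Fintype (U m)] [∀ m, DecidableEq (U m)]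
    (KUS : ∀ m, Matrix (U m) S ℝ)
    (μU : ∀ m, U m → ℝ)
    (KUD : ∀ m, Matrix (U m) (D m) ℝ)
    (tΓ : ∀ m, Matrix (U m) ((k : Fin M) × D k) ℝ)
    (htΓ : ∀ m, tΓ m = Matrix.of fun u d =>
      if h : d.1 = m then KUD m u (cast (congrArg D h) d.2)
      else (KUS m * KSS⁻¹ * KSD d.1) u d.2)
    (Φm : ∀ m, Matrix (U m) S ℝ)
    (hΦm : ∀ m, Φm m = KUS m + KUS m * KSS⁻¹ * (KSD m * (Q m)⁻¹ * (KSD m)ᵀ)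
      - KUD m * (Q m)⁻¹ * (KSD m)ᵀ)
    (ΓDD : Matrix ((m : Fin M) × D m) ((m : Fin M) × D m) ℝ)
    (hΓDD : ΓDD = KSDfᵀ * KSS⁻¹ * KSDf)
    (hGLinv : IsUnit (ΓDD + Λ).det)
    :
    ∀ m, μU m + (Φm m *ᵥ (Kdd⁻¹ *ᵥ ydd) - KUS m *ᵥ (KSS⁻¹ *ᵥ ydot m))
        + KUD m *ᵥ ((Q m)⁻¹ *ᵥ cY m)
      = μU m + tΓ m *ᵥ ((ΓDD + Λ)⁻¹ *ᵥ (yD - μD)) :=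
  stmt_11_general KSS hKSSinv KSD Q hQinv Λ hΛ KSDf hKSDf Kdd hKdd hKddinv yD μD cY hcY ydot hydot
    ydd hydd KUS μU KUD tΓ htΓ Φm hΦm ΓDD hΓDD
end
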